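/- arXiv:2604.25354 — 2 statements merged into one kernel-verified Lean document; each statement's English description precedes it below -/
import Mathlib

section
/- Let q be a power of a prime p, and let m, t be positive integers such that t + 1 divides q^m − 1 and p does not divide t + 1. Let u, v ∈ E with u ≠ v, and let λ ∈ E^* with λ ≠ 1 such that λ = η^{t+1} for some η ∈ E^* (i.e., λ is a (t+1)-th power in E^*). Set G(X) = (X + u)^t − λ·(X + v)^t and L = {α ∈ E : G(α) ≠ 0}. Then the Goppa code Γ_q(L, G) has minimum distance exactly d = t + 1. -/
open Polynomial

/-- The Goppa code `Γ_q(L, G)` with ordered support `α` and Goppa polynomial `G`: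
codewords `c ∈ F^n` such that `G` divides `∑ i, c_i · ∏_{j ≠ i} (X − α_j)` in `E[X]`. -/
def goppaCode (F : Type) {E : Type} [Field F] [Field E] [Algebra F E] {n : ℕ}
    (α : Fin n → E) (G : Polynomial E) : Set (Fin n → F) :=
  {c | G ∣ ∑ i : Fin n, Polynomial.C (algebraMap F E (c i)) *
      ∏ j ∈ Finset.univ.erase i, (Polynomial.X - Polynomial.C (α j))}

/-- A (nonzero, linear) code `Γ ⊆ F^n` has minimum distance `d`:
there is a nonzero codeword of Hamming weight `d`, and every nonzero codeword
has Hamming weight at least `d`. -/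
def hasMinDist {F : Type} [Zero F] [DecidableEq F] {n : ℕ}
    (Γ : Set (Fin n → F)) (d : ℕ) : Prop :=
  (∃ c ∈ Γ, c ≠ 0 ∧ hammingNorm c = d) ∧ ∀ c ∈ Γ, c ≠ 0 → d ≤ hammingNorm c

/-!
The lower bound is the classical Goppa bound: if `c` has support `S`, the defining sum is
`∏_{j ∉ S} (X - α_j)` times a nonzero polynomial of degree `< |S|`, and `G` is coprime to the
first factor, so `deg G < |S|`.

For a word of weight `t + 1`, put `H = (X + u)^(t+1) - λ (X + v)^(t+1)`, so that `H' = (t + 1) G`.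
The Möbius map `x ↦ (x + u) / (x + v)` sends the roots of `H` to the `(t+1)`-th roots of `λ`, of
which there are `t + 1` because `E` contains a primitive `(t+1)`-th root of unity; their preimages
`(w v - u) / (1 - w)` give `H = (1 - λ) ∏_{β} (X - β)` with distinct `β`. Hence
`∑_β ∏_{β' ≠ β} (X - β') = H' / (1 - λ)` is a multiple of `G`, and since the roots are
simple, `G(β) ≠ 0`, i.e. every `β` lies in the support. The indicator of the `β` is the
required codeword.
-/

open Finset Lagrange

section Nodal

variable {ι R : Type*} [CommRing R]

lemma eval_sum_C_mul_nodal_erase [DecidableEq ι] (s : Finset ι) (v r : ι → R) {k : ι}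
    (hk : k ∈ s) :
    (∑ i ∈ s, C (r i) * nodal (s.erase i) v).eval (v k)
      = r k * (nodal (s.erase k) v).eval (v k) := by
  rw [eval_finsetSum, sum_eq_single_of_mem k hk, eval_mul, eval_C]
  intro i _ hik
  rw [eval_mul, eval_nodal_at_node (mem_erase.mpr ⟨Ne.symm hik, hk⟩), mul_zero]

lemma sum_C_mul_nodal_erase_eq_nodal_compl_mul [Fintype ι] [DecidableEq ι] (v r : ι → R)
    (S : Finset ι) (hr : ∀ i ∉ S, r i = 0) :
    ∑ i, C (r i) * nodal (univ.erase i) v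
      = nodal (univ \ S) v * ∑ i ∈ S, C (r i) * nodal (S.erase i) v := by
  rw [mul_sum, ← sum_subset (subset_univ S) fun i _ hi => by simp [hr i hi]]
  refine sum_congr rfl fun i hi => ?_
  have hsplit : univ.erase i \ S.erase i = univ \ S := by
    ext j
    by_cases hj : j = i <;> simp [hj, hi]
  rw [nodal, ← prod_sdiff (erase_subset_erase i (subset_univ S)), hsplit, ← nodal, ← nodal]
  ring

lemma isCoprime_nodal_of_eval_ne_zero {K : Type*} [Field K] {v : ι → K} {G : K[X]}
    (s : Finset ι) (hG : ∀ i ∈ s, G.eval (v i) ≠ 0) : IsCoprime G (nodal s v) := by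
  refine IsCoprime.prod_right fun i hi => ?_
  rw [isCoprime_comm, (irreducible_X_sub_C (v i)).coprime_iff_not_dvd, dvd_iff_isRoot]
  exact hG i hi

variable [IsDomain R]

lemma eq_C_leadingCoeff_mul_nodal_of_isRoot {p : R[X]} (s : Finset R)
    (hroot : ∀ x ∈ s, p.IsRoot x) (hdeg : p.natDegree ≤ #s) :
    p = C p.leadingCoeff * nodal s id := by
  rcases eq_or_ne p 0 with rfl | hp
  · simp
  have hs : s.val = p.roots := by
    refine Multiset.eq_of_le_of_card_le ((Multiset.le_iff_subset s.nodup).mpr fun x hx => ?_)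
      ((card_roots' p).trans hdeg)
    exact (mem_roots hp).mpr (hroot x hx)
  have hcard : Multiset.card p.roots = p.natDegree :=
    le_antisymm (card_roots' p) (hs ▸ hdeg)
  conv_lhs => rw [← C_leadingCoeff_mul_prod_multiset_X_sub_C hcard, ← hs]
  rfl

lemma eval_derivative_C_mul_nodal_ne_zero {a : R} (ha : a ≠ 0) {s : Finset ι} {v : ι → R}
    (hv : Set.InjOn v s) {i : ι} (hi : i ∈ s) :
    (derivative (C a * nodal s v)).eval (v i) ≠ 0 := by
  classical
  rw [derivative_C_mul, eval_mul, eval_C, eval_nodal_derivative_eval_node_eq hi]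
  refine mul_ne_zero ha (eval_nodal_not_at_node fun j hj => ?_)
  exact fun h => (mem_erase.mp hj).1 (hv (mem_of_mem_erase hj) hi h.symm)

end Nodal

section Goppa

variable {F E : Type} [Field F] [Field E] [Algebra F E] {n : ℕ} {α : Fin n → E} {G : E[X]}

lemma hammingNorm_indicator {ι : Type*} [Fintype ι] [DecidableEq ι] [DecidableEq F]
    (S : Finset ι) :
    hammingNorm (fun i => if i ∈ S then (1 : F) else 0) = #S := by
  unfold hammingNorm
  congr 1
  ext i
  by_cases hi : i ∈ S <;> simp [hi]

lemma indicator_mem_goppaCode (S : Finset (Fin n)) (hS : G ∣ derivative (nodal S α)) :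
    (fun i => if i ∈ S then (1 : F) else 0) ∈ goppaCode F α G := by
  change G ∣ ∑ i, C (algebraMap F E (if i ∈ S then 1 else 0)) * nodal (univ.erase i) α
  rw [sum_C_mul_nodal_erase_eq_nodal_compl_mul α _ S fun i hi => by simp [hi]]
  refine dvd_mul_of_dvd_right ?_ _
  rw [derivative_nodal] at hS
  convert hS using 2 with i hi
  simp [hi]

lemma exists_mem_goppaCode_of_dvd_derivative_nodal [DecidableEq F] (hα : Function.Injective α)
    {s : Finset E} (hs : ↑s ⊆ Set.range α) (hG : G ∣ derivative (nodal s id)) :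
    ∃ c ∈ goppaCode F α G, hammingNorm c = #s := by
  set S := s.preimage α hα.injOn
  have hS : nodal S α = nodal s id :=
    prod_preimage α s hα.injOn (fun x => X - C x) fun x hx hxα => absurd (hs hx) hxα
  refine ⟨_, indicator_mem_goppaCode S (hS ▸ hG), ?_⟩
  rw [hammingNorm_indicator, ← natDegree_nodal (v := α), hS, natDegree_nodal]

theorem natDegree_lt_hammingNorm_of_mem_goppaCode [DecidableEq F] (hα : Function.Injective α)
    (hG : ∀ i, G.eval (α i) ≠ 0) {c : Fin n → F} (hc : c ∈ goppaCode F α G)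
    (hc0 : c ≠ 0) :
    G.natDegree < hammingNorm c := by
  set S : Finset (Fin n) := {i | c i ≠ 0}
  set R : E[X] := ∑ i ∈ S, C (algebraMap F E (c i)) * nodal (S.erase i) α
  have hGR : G ∣ R := by
    have hc' : G ∣ nodal (univ \ S) α * R := by
      rw [← sum_C_mul_nodal_erase_eq_nodal_compl_mul α _ S fun i hi => by simp_all [S]]
      exact hc
    exact (isCoprime_nodal_of_eval_ne_zero _ fun i _ => hG i).dvd_of_dvd_mul_left hc'
  obtain ⟨k, hk⟩ : ∃ k, c k ≠ 0 := Function.ne_iff.mp hc0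
  have hkS : k ∈ S := by simpa [S] using hk
  have hR0 : R ≠ 0 := by
    intro h
    have hRk := eval_sum_C_mul_nodal_erase S α (algebraMap F E ∘ c) hkS
    refine mul_ne_zero ((_root_.map_ne_zero _).mpr hk) ?_ (hRk.symm.trans (by simp [R, h]))
    exact eval_nodal_not_at_node fun j hj => hα.ne (mem_erase.mp hj).1.symm
  have hRdeg : R.natDegree < #S := by
    refine lt_of_le_of_lt (natDegree_sum_le_of_forall_le _ _ fun i hi => ?_)
      (Nat.sub_lt (card_pos.mpr ⟨k, hkS⟩) one_pos)
    exact (natDegree_C_mul_le _ _).trans (by rw [natDegree_nodal, card_erase_of_mem hi])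
  exact (natDegree_le_of_dvd hGR hR0).trans_lt hRdeg

end Goppa

lemma exists_isPrimitiveRoot_of_dvd_card_sub_one {K : Type*} [Field K] [Fintype K] {d : ℕ}
    (hd : d ∣ Fintype.card K - 1) : ∃ ζ : K, IsPrimitiveRoot ζ d := by
  classical
  rw [← Fintype.card_units] at hd
  have hd0 : d ≠ 0 := by
    rintro rfl
    exact Fintype.card_ne_zero (Nat.eq_zero_of_zero_dvd hd)
  obtain ⟨a, ha⟩ : ({a : Kˣ | orderOf a = d} : Finset Kˣ).Nonempty := by
    rw [← card_pos, IsCyclic.card_orderOf_eq_totient hd]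
    exact Nat.totient_pos.mpr (Nat.pos_of_ne_zero hd0)
  exact ⟨a, IsPrimitiveRoot.coe_units_iff.mpr
    ((mem_filter.mp ha).2 ▸ IsPrimitiveRoot.orderOf a)⟩

lemma card_nthRootsFinset_of_isPrimitiveRoot {K : Type*} [Field K] {d : ℕ} {ζ a η : K}
    (hζ : IsPrimitiveRoot ζ d) (ha : a ≠ 0) (hη : η ^ d = a) : #(nthRootsFinset d a) = d := by
  classical
  rw [nthRootsFinset_def, Multiset.toFinset_card_of_nodup (hζ.nthRoots_nodup ha),
    hζ.card_nthRoots, if_pos ⟨η, hη⟩]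

section FracLin

variable {E : Type} [Field E] (u v lam : E)

noncomputable def fracLinPoly (d : ℕ) : E[X] := (X + C u) ^ d - C lam * (X + C v) ^ d

variable {u v lam}

lemma natDegree_fracLinPoly_le (d : ℕ) : (fracLinPoly u v lam d).natDegree ≤ d :=
  have hX (a : E) : ((X + C a) ^ d).natDegree = d := by
    rw [natDegree_pow, natDegree_X_add_C, mul_one]
  (natDegree_sub_le _ _).trans (max_le (hX u).le ((natDegree_C_mul_le _ _).trans (hX v).le))

lemma coeff_fracLinPoly_self (d : ℕ) : (fracLinPoly u v lam d).coeff d = 1 - lam := by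
  have hu := ((monic_X_add_C u).pow d).coeff_natDegree
  have hv := ((monic_X_add_C v).pow d).coeff_natDegree
  rw [natDegree_pow, natDegree_X_add_C, mul_one] at hu hv
  rw [fracLinPoly, coeff_sub, coeff_C_mul, hu, hv, mul_one]

lemma natDegree_fracLinPoly (hlam : lam ≠ 1) (d : ℕ) : (fracLinPoly u v lam d).natDegree = d :=
  le_antisymm (natDegree_fracLinPoly_le d) <| le_natDegree_of_ne_zero <| by
    rw [coeff_fracLinPoly_self]
    exact sub_ne_zero.mpr hlam.symm

lemma leadingCoeff_fracLinPoly (hlam : lam ≠ 1) (d : ℕ) :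
    (fracLinPoly u v lam d).leadingCoeff = 1 - lam := by
  rw [leadingCoeff, natDegree_fracLinPoly hlam, coeff_fracLinPoly_self]

lemma derivative_fracLinPoly (d : ℕ) :
    derivative (fracLinPoly u v lam (d + 1)) = C ((d + 1 : ℕ) : E) * fracLinPoly u v lam d := by
  simp only [fracLinPoly, derivative_sub, derivative_C_mul, derivative_X_add_C_pow,
    Nat.add_sub_cancel]
  ring

lemma isRoot_fracLinPoly {w : E} (hw : w ≠ 1) {d : ℕ} (hwd : w ^ d = lam) :
    (fracLinPoly u v lam d).IsRoot ((w * v - u) / (1 - w)) := by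
  have hw' : 1 - w ≠ 0 := sub_ne_zero.mpr hw.symm
  have hmob : (w * v - u) / (1 - w) + u = w * ((w * v - u) / (1 - w) + v) := by
    field_simp
    ring
  simp [IsRoot, fracLinPoly, hmob, mul_pow, hwd]

lemma exists_finset_isRoot_fracLinPoly (huv : u ≠ v) (hlam0 : lam ≠ 0) (hlam1 : lam ≠ 1)
    {d : ℕ} (hd : 0 < d) {ζ η : E} (hζ : IsPrimitiveRoot ζ d) (hη : η ^ d = lam) :
    ∃ s : Finset E, #s = d ∧ ∀ x ∈ s, (fracLinPoly u v lam d).IsRoot x := by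
  classical
  have hroots : ∀ w ∈ nthRootsFinset d lam, w ^ d = lam ∧ w ≠ 1 := fun w hw => by
    have hwd := (mem_nthRootsFinset hd lam).mp hw
    exact ⟨hwd, fun h => hlam1 (by rw [← hwd, h, one_pow])⟩
  refine ⟨(nthRootsFinset d lam).image fun w => (w * v - u) / (1 - w), ?_, ?_⟩
  · rw [card_image_of_injOn, card_nthRootsFinset_of_isPrimitiveRoot hζ hlam0 hη]
    intro w₁ hw₁ w₂ hw₂ h
    have h₁ : 1 - w₁ ≠ 0 := sub_ne_zero.mpr (hroots w₁ hw₁).2.symm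
    have h₂ : 1 - w₂ ≠ 0 := sub_ne_zero.mpr (hroots w₂ hw₂).2.symm
    rw [div_eq_div_iff h₁ h₂] at h
    have : (w₁ - w₂) * (v - u) = 0 := by linear_combination h
    exact sub_eq_zero.mp ((mul_eq_zero.mp this).resolve_right (sub_ne_zero.mpr huv.symm))
  · simp only [mem_image]
    rintro _ ⟨w, hw, rfl⟩
    exact isRoot_fracLinPoly (hroots w hw).2 (hroots w hw).1

end FracLin

theorem goppa_fractional_linear_minDist_general
    (q m t : ℕ) (htdvd : (t + 1) ∣ q ^ m - 1)
    (F E : Type) [Field F] [DecidableEq F] [Field E] [Fintype E] [Algebra F E]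
    (hE : Fintype.card E = q ^ m)
    (u v : E) (huv : u ≠ v)
    (lam η : E) (hlam0 : lam ≠ 0) (hlam1 : lam ≠ 1) (hηpow : lam = η ^ (t + 1))
    (n : ℕ) (α : Fin n → E) (hα : Function.Injective α)
    (hrange : Set.range α =
      {x : E | ((X + C u) ^ t - C lam * (X + C v) ^ t : Polynomial E).eval x ≠ 0}) :
    hasMinDist (goppaCode F α ((X + C u) ^ t - C lam * (X + C v) ^ t : Polynomial E))
      (t + 1) := by
  change hasMinDist (goppaCode F α (fracLinPoly u v lam t)) (t + 1)
  change Set.range α = {x | (fracLinPoly u v lam t).eval x ≠ 0} at hrange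
  obtain ⟨ζ, hζ⟩ := exists_isPrimitiveRoot_of_dvd_card_sub_one (hE ▸ htdvd)
  obtain ⟨s, hs, hroot⟩ :=
    exists_finset_isRoot_fracLinPoly huv hlam0 hlam1 (by positivity) hζ hηpow.symm
  have hunit : IsUnit (1 - lam) := (sub_ne_zero.mpr hlam1.symm).isUnit
  have hH : fracLinPoly u v lam (t + 1) = C (1 - lam) * nodal s id := by
    simpa only [leadingCoeff_fracLinPoly hlam1] using
      eq_C_leadingCoeff_mul_nodal_of_isRoot s hroot (natDegree_fracLinPoly hlam1 _ ▸ hs.ge)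
  have hdvd : fracLinPoly u v lam t ∣ derivative (nodal s id) := by
    rw [← (isUnit_C.mpr hunit).dvd_mul_left, ← derivative_C_mul, ← hH, derivative_fracLinPoly]
    exact dvd_mul_left _ _
  have hs_range : ↑s ⊆ Set.range α := fun x hx => by
    rw [hrange]
    refine fun h => eval_derivative_C_mul_nodal_ne_zero hunit.ne_zero (Set.injOn_id _) hx ?_
    rw [← hH, derivative_fracLinPoly, eval_mul, id, h, mul_zero]
  obtain ⟨c, hc, hwt⟩ := exists_mem_goppaCode_of_dvd_derivative_nodal (F := F) hα hs_range hdvd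
  refine ⟨⟨c, hc, hammingNorm_ne_zero_iff.mp (by omega), hwt.trans hs⟩, fun c hc hc0 => ?_⟩
  exact natDegree_fracLinPoly hlam1 t ▸
    natDegree_lt_hammingNorm_of_mem_goppaCode hα (fun i => hrange.subset ⟨i, rfl⟩) hc hc0

/-- Theorem: Goppa codes with `G(X) = (X+u)^t - λ(X+v)^t`.
Let `q = p^e`, `(t+1) ∣ q^m - 1`, `p ∤ t + 1`, `u ≠ v` in `E`, and let
`λ ∈ E^* \ {1}` be a `(t+1)`-th power in `E^*`. With
`G(X) = (X+u)^t - λ(X+v)^t` and support set `L = {α ∈ E : G(α) ≠ 0}`, the Goppa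
code `Γ_q(L, G)` has minimum distance exactly `t + 1`. -/
theorem goppa_fractional_linear_minDist
    (p e q m t : ℕ) (hp : p.Prime) (hq : q = p ^ e) (he : 0 < e)
    (hm : 0 < m) (ht : 0 < t) (htdvd : (t + 1) ∣ q ^ m - 1) (hpt : ¬ p ∣ (t + 1))
    (F E : Type) [Field F] [Fintype F] [DecidableEq F] [Field E] [Fintype E] [Algebra F E]
    (hF : Fintype.card F = q) (hE : Fintype.card E = q ^ m)
    (u v : E) (huv : u ≠ v)
    (lam η : E) (hlam0 : lam ≠ 0) (hlam1 : lam ≠ 1) (hη : η ≠ 0) (hηpow : lam = η ^ (t + 1))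
    (n : ℕ) (α : Fin n → E) (hα : Function.Injective α)
    (hrange : Set.range α =
      {x : E | ((X + C u) ^ t - C lam * (X + C v) ^ t : Polynomial E).eval x ≠ 0}) :
    hasMinDist (goppaCode F α ((X + C u) ^ t - C lam * (X + C v) ^ t : Polynomial E))
      (t + 1) :=
  goppa_fractional_linear_minDist_general q m t htdvd F E hE u v huv lam η hlam0 hlam1 hηpow n α hα
    hrange
end

section
/- Let q be a prime power and m a positive integer. Let r be an integer with 1 ≤ r < q − 1 and r dividing q − 1, and set t = r·(q^m − 1)/(q − 1). Take the support set L = E^* (all nonzero elements of E) and the Goppa polynomial G(X) = X^t. Then the Goppa code Γ_q(L, G) has minimum distance exactly d = t + 1. -/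
/-! The Goppa bound gives `d ≥ t + 1`: for `c` supported on `s`, the numerator factors as
`∏_{j ∉ s} (X - α_j) * M` with `M ≠ 0` of degree `< #s`, and `X ^ t` is coprime to the first
factor.

Conversely, by Lagrange interpolation of `X ^ t`, a set `s` of `t + 1` points of `E^*` supports
a codeword as soon as `x ^ t / P'(x) ∈ F` for `x ∈ s`, where `P = ∏_{y ∈ s} (X - y)`. With
`n₀ = (q^m - 1) / (q - 1)`, the map `x ↦ x ^ n₀` is the norm to `F`, so `x ^ t = (x ^ n₀) ^ r`
lies in `F`. Take `P = X * g(X ^ n₀)` with `g ∈ F[X]` a product of `r` distinct factors `X - y`,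
`y ∈ F^*`: it divides `X ^ (q^m) - X`, hence has `t + 1` distinct roots, and
`P'(x) = (g + n₀ X g')(x ^ n₀) ∈ F` for every `x`. Translating the roots by a non-root `u` moves
them into `E^*` and keeps the values of `P'` in `F`. -/

open Polynomial

open Finset Lagrange

section CommRing

variable {R : Type*} [CommRing R] {ι : Type*}

theorem sum_C_mul_nodal_univ_erase_eq_nodal_sdiff_mul [Fintype ι] [DecidableEq ι] {v c : ι → R}
    {s : Finset ι} (hc : ∀ i ∉ s, c i = 0) :
    ∑ i, C (c i) * nodal (univ.erase i) v =
      nodal (univ \ s) v * ∑ i ∈ s, C (c i) * nodal (s.erase i) v := by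
  rw [mul_sum, ← sum_subset (subset_univ s) fun i _ hi => by simp [hc i hi]]
  refine sum_congr rfl fun i hi => ?_
  have hsplit : univ.erase i \ s.erase i = univ \ s := by
    ext j; by_cases j = i <;> simp_all
  rw [nodal, ← prod_sdiff (erase_subset_erase i (subset_univ s)), hsplit, ← nodal, ← nodal]
  ring

theorem nodal_comp_X_add_C (s : Finset ι) (v : ι → R) (u : R) :
    (nodal s v).comp (X + C u) = nodal s (fun i => v i - u) := by
  simp only [nodal, Polynomial.prod_comp, sub_comp, X_comp, C_comp, C_sub]
  refine prod_congr rfl fun i _ => ?_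
  ring

theorem eval_derivative_X_mul_comp_X_pow (p : R[X]) (n : ℕ) (x : R) :
    (derivative (X * p.comp (X ^ n))).eval x =
      (p + C (n : R) * X * derivative p).eval (x ^ n) := by
  rcases Nat.eq_zero_or_pos n with rfl | hn
  · simp
  simp only [derivative_mul, derivative_X, derivative_comp, derivative_X_pow, eval_add, eval_mul,
    eval_one, eval_X, eval_comp, eval_pow, eval_C]
  rw [← mul_pow_sub_one hn.ne' x]
  ring

theorem X_mul_comp_X_pow_dvd {p : R[X]} {k : ℕ} (hp : p ∣ X ^ k - 1) (n : ℕ) :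
    X * p.comp (X ^ n) ∣ X ^ (k * n + 1) - X := by
  have : X ^ (k * n + 1) - X = X * (X ^ k - 1 : R[X]).comp (X ^ n) := by
    rw [sub_comp, pow_comp, X_comp, one_comp, ← pow_mul, pow_succ']
    ring
  exact this ▸ mul_dvd_mul_left X (map_dvd (compRingHom (X ^ n)) hp)

end CommRing

section Field

variable {K : Type*} [Field K] {ι : Type*}

theorem isCoprime_X_sub_C_of_eval_ne_zero {p : K[X]} {a : K} (h : p.eval a ≠ 0) :
    IsCoprime (X - C a) p :=
  (irreducible_X_sub_C a).coprime_iff_not_dvd.mpr (by rwa [dvd_iff_isRoot])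

theorem eval_nodal_erase_self_ne_zero [DecidableEq ι] {s : Finset ι} {v : ι → K}
    (hvs : Set.InjOn v s) {i : ι} (hi : i ∈ s) : (nodal (s.erase i) v).eval (v i) ≠ 0 := by
  simpa [nodalWeight_eq_eval_nodal_erase_inv] using nodalWeight_ne_zero hvs hi

theorem sum_C_mul_nodal_erase_eq_interpolate [DecidableEq ι] {s : Finset ι} {v : ι → K}
    (hvs : Set.InjOn v s) (a : ι → K) :
    ∑ i ∈ s, C (a i) * nodal (s.erase i) v =
      interpolate s v (fun i => a i * (nodal (s.erase i) v).eval (v i)) := by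
  rw [interpolate_apply]
  refine sum_congr rfl fun i hi => ?_
  rw [basis_eq_prod_sub_inv_mul_nodal_div hi, ← nodal_erase_eq_nodal_div hi,
    nodalWeight_eq_eval_nodal_erase_inv, ← mul_assoc, ← C_mul,
    mul_inv_cancel_right₀ (eval_nodal_erase_self_ne_zero hvs hi)]

theorem exists_nodal_eq_nodal_of_mem_range {κ : Type*} {α : ι → K} (hα : Function.Injective α)
    {s : Finset κ} {v : κ → K} (hvs : Set.InjOn v s) (hv : ∀ i ∈ s, v i ∈ Set.range α) :
    ∃ I : Finset ι, nodal I α = nodal s v := by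
  classical
  refine ⟨(s.image v).preimage α hα.injOn, ?_⟩
  rw [nodal, prod_preimage α _ _ (fun y => X - C y), prod_image hvs, nodal]
  intro y hy hyα
  obtain ⟨i, hi, rfl⟩ := mem_image.mp hy
  exact absurd (hv i hi) hyα

end Field

section Goppa

variable {F E : Type} [Field F] [Field E] [Algebra F E] {n : ℕ} {α : Fin n → E} {G : E[X]}

theorem mem_goppaCode_iff {c : Fin n → F} :
    c ∈ goppaCode F α G ↔ G ∣ ∑ i, C (algebraMap F E (c i)) * nodal (univ.erase i) α :=
  Iff.rfl

theorem natDegree_add_one_le_hammingNorm_of_mem_goppaCode [DecidableEq F]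
    (hα : Function.Injective α) (hG : ∀ i, G.eval (α i) ≠ 0) {c : Fin n → F}
    (hc : c ∈ goppaCode F α G) (hc0 : c ≠ 0) : G.natDegree + 1 ≤ hammingNorm c := by
  set s : Finset (Fin n) := {i | c i ≠ 0}
  obtain ⟨i₀, hi₀⟩ := Function.ne_iff.mp hc0
  have hi₀s : i₀ ∈ s := by simpa [s] using hi₀
  set M := ∑ i ∈ s, C (algebraMap F E (c i)) * nodal (s.erase i) α
  have hGM : G ∣ M := by
    rw [mem_goppaCode_iff, sum_C_mul_nodal_univ_erase_eq_nodal_sdiff_mul (s := s) (by simp [s])]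
      at hc
    exact (IsCoprime.prod_left fun j _ => isCoprime_X_sub_C_of_eval_ne_zero (hG j)).symm
      |>.dvd_of_dvd_mul_left hc
  have hM : M = interpolate s α _ :=
    sum_C_mul_nodal_erase_eq_interpolate hα.injOn fun i => algebraMap F E (c i)
  have hM0 : M ≠ 0 := fun h => by
    have := congrArg (eval (α i₀)) hM
    rw [eval_interpolate_at_node _ hα.injOn hi₀s, h, eval_zero] at this
    exact mul_ne_zero ((_root_.map_ne_zero _).mpr hi₀)
      (eval_nodal_erase_self_ne_zero hα.injOn hi₀s) this.symm
  have hMdeg : M.natDegree < #s :=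
    (natDegree_lt_iff_degree_lt hM0).mpr (hM ▸ degree_interpolate_lt _ hα.injOn)
  have hGdeg := natDegree_le_of_dvd hGM hM0
  change _ ≤ #s
  omega

theorem exists_mem_goppaCode_hammingNorm_eq [DecidableEq F] (hα : Function.Injective α)
    (s : Finset (Fin n)) (hdeg : G.degree < #s) (hG : ∀ i ∈ s, G.eval (α i) ≠ 0)
    (hF : ∀ i ∈ s,
      G.eval (α i) / (derivative (nodal s α)).eval (α i) ∈ (algebraMap F E).fieldRange) :
    ∃ c ∈ goppaCode F α G, hammingNorm c = #s := by
  simp only [RingHom.mem_fieldRange] at hF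
  choose! a ha using hF
  have hnode : ∀ i ∈ s, (derivative (nodal s α)).eval (α i) = (nodal (s.erase i) α).eval (α i) :=
    fun i hi => eval_nodal_derivative_eval_node_eq hi
  have ha0 : ∀ i ∈ s, a i ≠ 0 := fun i hi h => by
    have := ha i hi
    rw [h, map_zero, hnode i hi, eq_comm, div_eq_zero_iff] at this
    exact this.elim (hG i hi) (eval_nodal_erase_self_ne_zero hα.injOn hi)
  let c : Fin n → F := fun i => if i ∈ s then a i else 0
  have hsum : ∑ i ∈ s, C (algebraMap F E (c i)) * nodal (s.erase i) α = G := by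
    rw [sum_C_mul_nodal_erase_eq_interpolate hα.injOn, eq_interpolate hα.injOn hdeg]
    refine interpolate_eq_of_values_eq_on _ _ fun i hi => ?_
    simp only [c, if_pos hi, ha i hi, hnode i hi]
    exact div_mul_cancel₀ _ (eval_nodal_erase_self_ne_zero hα.injOn hi)
  refine ⟨c, ?_, ?_⟩
  · rw [mem_goppaCode_iff, sum_C_mul_nodal_univ_erase_eq_nodal_sdiff_mul (s := s)
      fun i hi => by simp [c, hi], hsum]
    exact dvd_mul_left _ _
  · change #{i | c i ≠ 0} = #s
    congr 1
    ext i
    by_cases hi : i ∈ s <;> simp [c, hi, ha0]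

end Goppa

section FiniteField

theorem nodal_units_dvd_X_pow_card_sub_one {K : Type*} [Field K] [Fintype K] (Y : Finset Kˣ) :
    nodal Y (↑) ∣ (X ^ (Fintype.card K - 1) - 1 : K[X]) :=
  Finset.prod_dvd_of_coprime ((pairwise_coprime_X_sub_C Units.val_injective).set_pairwise _)
    fun y _ => by
      rw [dvd_iff_isRoot, IsRoot, eval_sub, eval_pow, eval_X, eval_one,
        FiniteField.pow_card_sub_one_eq_one _ y.ne_zero, sub_self]

theorem exists_eq_nodal_of_dvd_X_pow_card_sub_X {K : Type*} [Field K] [Fintype K] {P : K[X]}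
    (hP : P.Monic) (hdvd : P ∣ X ^ Fintype.card K - X) : ∃ S : Finset K, P = nodal S id := by
  have h0 : (X ^ Fintype.card K - X : K[X]) ≠ 0 :=
    FiniteField.X_pow_card_sub_X_ne_zero K Fintype.one_lt_card
  have hsplit : Splits (X ^ Fintype.card K - X : K[X]) := by
    rw [splits_iff_card_roots, FiniteField.roots_X_pow_card_sub_X,
      FiniteField.X_pow_card_sub_X_natDegree_eq K Fintype.one_lt_card]
    rfl
  have hnodup : P.roots.Nodup := Multiset.nodup_of_le (roots.le_of_dvd h0 hdvd)
    (FiniteField.roots_X_pow_card_sub_X K ▸ univ.nodup)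
  refine ⟨⟨P.roots, hnodup⟩, ?_⟩
  conv_lhs => rw [(hsplit.of_dvd h0 hdvd).eq_prod_roots_of_monic hP]
  rfl

theorem exists_monic_dvd_X_pow_card_sub_X_eval_derivative_mem_fieldRange {F E : Type*} [Field F]
    [Fintype F] [Field E] [Fintype E] [Algebra F E] {k n₀ : ℕ} (hk : k ≤ Fintype.card F - 1)
    (hn₀ : (Fintype.card F - 1) * n₀ + 1 = Fintype.card E)
    (hnorm : ∀ x : E, x ^ n₀ ∈ (algebraMap F E).fieldRange) :
    ∃ P : E[X], P.Monic ∧ P.natDegree = k * n₀ + 1 ∧ P ∣ X ^ Fintype.card E - X ∧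
      ∀ x, (derivative P).eval x ∈ (algebraMap F E).fieldRange := by
  classical
  obtain ⟨Y, -, hY⟩ := exists_subset_card_eq (s := (univ : Finset Fˣ)) (n := k)
    (by rwa [card_univ, Fintype.card_units])
  set g : F[X] := nodal Y (↑)
  have hn₀0 : n₀ ≠ 0 := by
    rintro rfl
    exact Fintype.one_lt_card.ne (by simpa using hn₀)
  have hmonic : (g.map (algebraMap F E)).comp (X ^ n₀) |>.Monic :=
    (nodal_monic.map _).comp (monic_X_pow _) (by simpa)
  refine ⟨X * (g.map (algebraMap F E)).comp (X ^ n₀), monic_X.mul hmonic, ?_, ?_, fun x => ?_⟩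
  · rw [monic_X.natDegree_mul hmonic, natDegree_comp, natDegree_map, natDegree_nodal, hY,
      natDegree_X, natDegree_X_pow]
    ring
  · rw [← hn₀]
    refine X_mul_comp_X_pow_dvd ?_ n₀
    simpa using map_dvd (mapRingHom (algebraMap F E)) (nodal_units_dvd_X_pow_card_sub_one Y)
  · obtain ⟨a, ha⟩ := hnorm x
    have : g.map (algebraMap F E) + C (n₀ : E) * X * derivative (g.map (algebraMap F E)) =
        (g + C (n₀ : F) * X * derivative g).map (algebraMap F E) := by
      simp [derivative_map]
    rw [eval_derivative_X_mul_comp_X_pow, this, ← ha, eval_map_apply]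
    exact ⟨_, rfl⟩

theorem exists_nodal_eq_comp_X_add_C {E : Type*} [Field E] [Fintype E] {ι : Type*} {α : ι → E}
    (hα : Function.Injective α) (hrange : Set.range α = {x | x ≠ 0}) {P : E[X]} (hP : P.Monic)
    (hdvd : P ∣ X ^ Fintype.card E - X) (hdeg : P.natDegree < Fintype.card E) :
    ∃ (I : Finset ι) (u : E), nodal I α = P.comp (X + C u) := by
  obtain ⟨S, rfl⟩ := exists_eq_nodal_of_dvd_X_pow_card_sub_X hP hdvd
  rw [natDegree_nodal] at hdeg
  obtain ⟨u, -, hu⟩ := exists_mem_notMem_of_card_lt_card (s := S) (t := univ) (by rwa [card_univ])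
  obtain ⟨I, hI⟩ := exists_nodal_eq_nodal_of_mem_range hα (v := fun x => x - u)
    sub_left_injective.injOn
    fun x hx => by rw [hrange]; exact sub_ne_zero.mpr (ne_of_mem_of_not_mem hx hu)
  exact ⟨I, u, hI.trans (nodal_comp_X_add_C S id u).symm⟩

end FiniteField

theorem monomial_goppa_minDist_general
    (q m r t : ℕ) (hr2 : r < q - 1)
    (ht : t * (q - 1) = r * (q ^ m - 1))
    (F E : Type) [Field F] [Fintype F] [DecidableEq F] [Field E] [Fintype E] [Algebra F E]
    (hF : Fintype.card F = q) (hE : Fintype.card E = q ^ m)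
    (α : Fin (q ^ m - 1) → E) (hα : Function.Injective α)
    (hrange : Set.range α = {x : E | x ≠ 0}) :
    hasMinDist (goppaCode F α (X ^ t : Polynomial E)) (t + 1) := by
  have hG : ∀ i, (X ^ t : E[X]).eval (α i) ≠ 0 := fun i => by
    simpa using pow_ne_zero t (hrange ▸ Set.mem_range_self i : α i ∈ {x : E | x ≠ 0})
  refine ⟨?_, fun c hc hc0 => by
    simpa using natDegree_add_one_le_hammingNorm_of_mem_goppaCode hα hG hc hc0⟩
  set n₀ := (q ^ m - 1) / (q - 1)
  have hQ : 1 < q ^ m := hE ▸ Fintype.one_lt_card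
  have hn₀ : (q - 1) * n₀ = q ^ m - 1 := Nat.mul_div_cancel' (Nat.sub_one_dvd_pow_sub_one q m)
  have htn₀ : t = r * n₀ :=
    Nat.eq_of_mul_eq_mul_right (m := q - 1) (by omega) (by rw [ht, ← hn₀]; ring)
  have hnorm : ∀ x : E, x ^ n₀ ∈ (algebraMap F E).fieldRange := fun x =>
    ⟨_, by rw [FiniteField.algebraMap_norm_eq_pow, Nat.card_eq_fintype_card,
      Nat.card_eq_fintype_card, hE, hF]⟩
  obtain ⟨P, hPm, hPdeg, hPdvd, hP'⟩ :=
    exists_monic_dvd_X_pow_card_sub_X_eval_derivative_mem_fieldRange (F := F) (k := r)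
      (by omega) (by rw [hF, hE]; omega) hnorm
  have hlt : r * n₀ < (q - 1) * n₀ := Nat.mul_lt_mul_of_pos_right hr2
    (Nat.pos_of_ne_zero fun h => by rw [h, mul_zero] at hn₀; omega)
  obtain ⟨I, u, hI⟩ := exists_nodal_eq_comp_X_add_C hα hrange hPm hPdvd (by rw [hPdeg, hE]; omega)
  have hIcard : #I = t + 1 := by
    rw [← natDegree_nodal (v := α), hI, natDegree_comp, hPdeg, htn₀]
    simp
  obtain ⟨c, hc, hcw⟩ := exists_mem_goppaCode_hammingNorm_eq (F := F) hα I
    (by rw [degree_X_pow, hIcard]; exact_mod_cast t.lt_succ_self) (fun i _ => hG i)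
    fun i _ => div_mem (by simpa [htn₀, pow_mul'] using pow_mem (hnorm (α i)) r)
      (by simpa [hI, derivative_comp] using hP' (α i + u))
  exact ⟨c, hc, hammingNorm_ne_zero_iff.mp (by omega), hcw.trans hIcard⟩

/-- Proposition: monomial Goppa codes with `t = r(q^m-1)/(q-1)`.
Let `1 ≤ r < q - 1` with `r ∣ q - 1` and `t = r(q^m - 1)/(q - 1)`. With support set
`L = E^*` and Goppa polynomial `G(X) = X^t`, the Goppa code `Γ_q(L, G)` has minimum
distance exactly `t + 1`. -/
theorem monomial_goppa_minDist
    (q m r t : ℕ) (hq : IsPrimePow q) (hm : 0 < m)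
    (hr1 : 1 ≤ r) (hr2 : r < q - 1) (hrdvd : r ∣ q - 1)
    (ht : t * (q - 1) = r * (q ^ m - 1))
    (F E : Type) [Field F] [Fintype F] [DecidableEq F] [Field E] [Fintype E] [Algebra F E]
    (hF : Fintype.card F = q) (hE : Fintype.card E = q ^ m)
    (α : Fin (q ^ m - 1) → E) (hα : Function.Injective α)
    (hrange : Set.range α = {x : E | x ≠ 0}) :
    hasMinDist (goppaCode F α (X ^ t : Polynomial E)) (t + 1) :=
  monomial_goppa_minDist_general q m r t hr2 ht F E hF hE α hα hrange
end
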